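/- For every n ∈ ℕ, ρ̄ⁿ ≤ ρ̄^{n+1}, where ρ̄ⁿ is the infimum over all 2ⁿ×2ⁿ stochastic matrices p of max_{m∈{1,…,2ⁿ}} Σ_{h=1}^{2ⁿ} 2ⁿ λ^{(n)}_h p_{h,m} / μ̂^{(n)}_{h,m}. -/

import Mathlib

open MeasureTheory Set Finset

/-- Integral of the arrival rate function over the `h`-th dyadic subinterval of
`[0,1]` at level `n`: `λ^{(n)}_h = ∫_{h/2ⁿ}^{(h+1)/2ⁿ} λ(x) dx`. -/
noncomputable def lamDyadic (lam : ℝ → ℝ) (n : ℕ) (h : Fin (2 ^ n)) : ℝ :=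
  ∫ x in (((h : ℕ) : ℝ) / 2 ^ n)..((((h : ℕ) : ℝ) + 1) / 2 ^ n), lam x

/-- Maximum of `f` on the dyadic square
`[h/2ⁿ,(h+1)/2ⁿ] × [m/2ⁿ,(m+1)/2ⁿ]`, realized as the `sSup` of the image. -/
noncomputable def muHatDyadic (f : ℝ × ℝ → ℝ) (n : ℕ) (h m : Fin (2 ^ n)) : ℝ :=
  sSup (f '' (Icc (((h : ℕ) : ℝ) / 2 ^ n) ((((h : ℕ) : ℝ) + 1) / 2 ^ n) ×ˢ
              Icc (((m : ℕ) : ℝ) / 2 ^ n) ((((m : ℕ) : ℝ) + 1) / 2 ^ n)))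

/-- A matrix with entries in `[0,1]` and unit row sums. -/
def IsStochastic {H M : ℕ} (p : Fin H → Fin M → ℝ) : Prop :=
  (∀ h m, 0 ≤ p h m ∧ p h m ≤ 1) ∧ ∀ h, ∑ m, p h m = 1

/-- `ρ̄ⁿ`: the infimum over all `2ⁿ×2ⁿ` stochastic matrices `p` of
`max_m Σ_h 2ⁿ λ^{(n)}_h p_{h,m} / μ̂^{(n)}_{h,m}`. -/
noncomputable def rhoBar (f : ℝ × ℝ → ℝ) (lam : ℝ → ℝ) (n : ℕ) : ℝ :=
  sInf { r : ℝ | ∃ p : Fin (2 ^ n) → Fin (2 ^ n) → ℝ, IsStochastic p ∧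
    r = ⨆ m : Fin (2 ^ n), ∑ h : Fin (2 ^ n),
      (2 ^ n : ℝ) * lamDyadic lam n h * p h m / muHatDyadic f n h m }

/-!
Given a stochastic matrix `p` at level `n + 1`, let the coarse cell `h` send to the coarse
server `m` the `λ`-weighted average, over the two halves of `h`, of the mass that `p` sends to
the two halves of `m`. This is a stochastic matrix at level `n`. Since `μ̂` on a square dominates
`μ̂` on its four sub-squares, the coarse load of server `m` is at most the sum of the fine loads
(at scale `2ⁿ`) of the two halves of `m`, hence at most twice the worst fine load at scale `2ⁿ`,
which is the worst fine load at scale `2ⁿ⁺¹`.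
-/

section Stochastic

variable {H M : ℕ}

theorem IsStochastic.of_nonneg {p : Fin H → Fin M → ℝ} (h0 : ∀ h m, 0 ≤ p h m)
    (h1 : ∀ h, ∑ m, p h m = 1) : IsStochastic p :=
  ⟨fun h m => ⟨h0 h m, h1 h ▸ single_le_sum (fun m _ => h0 h m) (mem_univ m)⟩, h1⟩

theorem exists_isStochastic (hM : 0 < M) : ∃ p : Fin H → Fin M → ℝ, IsStochastic p :=
  ⟨fun _ _ => (M : ℝ)⁻¹, .of_nonneg (fun _ _ => by positivity) fun _ => by simp [hM.ne']⟩

theorem Finset.exists_nonneg_sum_eq_one_and_sum_mul_eq {ι : Type*} {s : Finset ι}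
    (hs : s.Nonempty) {L : ι → ℝ} (hL : ∀ i, 0 ≤ L i) :
    ∃ w : ι → ℝ, (∀ i, 0 ≤ w i) ∧ ∑ i ∈ s, w i = 1 ∧ ∀ i ∈ s, (∑ j ∈ s, L j) * w i = L i := by
  by_cases hz : ∑ j ∈ s, L j = 0
  · have hL0 := (sum_eq_zero_iff_of_nonneg fun i _ => hL i).1 hz
    exact ⟨fun _ => (#s : ℝ)⁻¹, fun _ => by positivity, by simp [hs.card_pos.ne'],
      fun i hi => by simp [hz, hL0 i hi]⟩
  · exact ⟨fun i => L i / ∑ j ∈ s, L j, fun i => div_nonneg (hL i) (sum_nonneg fun j _ => hL j),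
      by rw [← sum_div, div_self hz], fun i _ => mul_div_cancel₀ _ hz⟩

end Stochastic

section Load

variable {H M : ℕ}

noncomputable def serverLoad (c : ℝ) (Λ : Fin H → ℝ) (μ p : Fin H → Fin M → ℝ) (m : Fin M) : ℝ :=
  ∑ h, c * Λ h * p h m / μ h m

noncomputable def maxServerLoad (c : ℝ) (Λ : Fin H → ℝ) (μ p : Fin H → Fin M → ℝ) : ℝ :=
  ⨆ m, serverLoad c Λ μ p m

noncomputable def optimalMaxLoad (c : ℝ) (Λ : Fin H → ℝ) (μ : Fin H → Fin M → ℝ) : ℝ :=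
  sInf {r | ∃ p, IsStochastic p ∧ r = maxServerLoad c Λ μ p}

theorem rhoBar_eq_optimalMaxLoad (f : ℝ × ℝ → ℝ) (lam : ℝ → ℝ) (n : ℕ) :
    rhoBar f lam n = optimalMaxLoad (2 ^ n) (lamDyadic lam n) (muHatDyadic f n) :=
  rfl

theorem maxServerLoad_nonneg {c : ℝ} {Λ : Fin H → ℝ} {μ p : Fin H → Fin M → ℝ} (hc : 0 ≤ c)
    (hΛ : ∀ h, 0 ≤ Λ h) (hμ : ∀ h m, 0 ≤ μ h m) (hp : IsStochastic p) :
    0 ≤ maxServerLoad c Λ μ p :=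
  Real.iSup_nonneg fun m => sum_nonneg fun h _ =>
    div_nonneg (mul_nonneg (mul_nonneg hc (hΛ h)) (hp.1 h m).1) (hμ h m)

theorem maxServerLoad_mul_left {k : ℝ} (hk : 0 ≤ k) (c : ℝ) (Λ : Fin H → ℝ)
    (μ p : Fin H → Fin M → ℝ) : maxServerLoad (k * c) Λ μ p = k * maxServerLoad c Λ μ p := by
  simp only [maxServerLoad, Real.mul_iSup_of_nonneg hk, serverLoad, mul_sum]
  exact iSup_congr fun m => sum_congr rfl fun h _ => by ring

end Load

section Refinement

variable {H M H' M' : ℕ} {π : Fin H' → Fin H} {σ : Fin M' → Fin M} {c : ℝ} {L : Fin H' → ℝ}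
  {μ : Fin H → Fin M → ℝ} {μ' : Fin H' → Fin M' → ℝ}

theorem exists_isStochastic_serverLoad_le_sum (hπ : Function.Surjective π) (hc : 0 ≤ c)
    (hL : ∀ a, 0 ≤ L a) (hμ' : ∀ a b, 0 < μ' a b) (hμμ' : ∀ a b, μ' a b ≤ μ (π a) (σ b))
    {p : Fin H' → Fin M' → ℝ} (hp : IsStochastic p) :
    ∃ q, IsStochastic q ∧ ∀ m, serverLoad c (fun h => ∑ a with π a = h, L a) μ q m ≤
      ∑ b with σ b = m, serverLoad c L μ' p b := by
  choose w hw0 hw1 hwL using fun h =>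
    exists_nonneg_sum_eq_one_and_sum_mul_eq (s := {a | π a = h})
      ((hπ h).imp fun a ha => mem_filter.2 ⟨Finset.mem_univ a, ha⟩) hL
  refine ⟨fun h m => ∑ a with π a = h, w h a * ∑ b with σ b = m, p a b, .of_nonneg
    (fun h m => sum_nonneg fun a _ => mul_nonneg (hw0 h a) (sum_nonneg fun b _ => (hp.1 a b).1))
    (fun h => ?_), fun m => ?_⟩
  · rw [sum_comm]
    simp only [← mul_sum, sum_fiberwise, hp.2, mul_one, hw1]
  · calc serverLoad c (fun h => ∑ a with π a = h, L a) μ _ m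
        = ∑ h, ∑ a with π a = h, ∑ b with σ b = m, c * L a * p a b / μ h m := by
          refine sum_congr rfl fun h _ => ?_
          have hwL := hwL h
          dsimp only
          generalize ∑ j with π j = h, L j = Λ at hwL ⊢
          simp only [mul_sum, sum_div]
          refine sum_congr rfl fun a ha => sum_congr rfl fun b _ => ?_
          rw [← hwL a ha]
          ring
      _ ≤ ∑ h, ∑ a with π a = h, ∑ b with σ b = m, c * L a * p a b / μ' a b := by
          refine sum_le_sum fun h _ => sum_le_sum fun a ha => sum_le_sum fun b hb => ?_
          obtain rfl := (mem_filter.1 ha).2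
          obtain rfl := (mem_filter.1 hb).2
          exact div_le_div_of_nonneg_left (mul_nonneg (mul_nonneg hc (hL a)) (hp.1 a b).1)
            (hμ' a b) (hμμ' a b)
      _ = ∑ b with σ b = m, serverLoad c L μ' p b := by
          rw [sum_fiberwise, sum_comm]
          rfl

theorem optimalMaxLoad_le_of_refinement {K : ℕ} (hπ : Function.Surjective π)
    (hσ : ∀ m, #{b | σ b = m} = K) (hM' : 0 < M') (hc : 0 ≤ c) (hL : ∀ a, 0 ≤ L a)
    (hμ : ∀ h m, 0 ≤ μ h m) (hμ' : ∀ a b, 0 < μ' a b) (hμμ' : ∀ a b, μ' a b ≤ μ (π a) (σ b)) :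
    optimalMaxLoad c (fun h => ∑ a with π a = h, L a) μ ≤ optimalMaxLoad (K * c) L μ' := by
  have hΛ : ∀ h, 0 ≤ ∑ a with π a = h, L a := fun h => sum_nonneg fun a _ => hL a
  obtain ⟨p₀, hp₀⟩ := exists_isStochastic (H := H') hM'
  refine le_csInf ⟨_, p₀, hp₀, rfl⟩ ?_
  rintro _ ⟨p, hp, rfl⟩
  obtain ⟨q, hq, hload⟩ := exists_isStochastic_serverLoad_le_sum hπ hc hL hμ' hμμ' hp
  have hfine := maxServerLoad_nonneg hc hL (fun a b => (hμ' a b).le) hp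
  calc optimalMaxLoad c _ μ ≤ maxServerLoad c (fun h => ∑ a with π a = h, L a) μ q :=
        csInf_le ⟨0, by rintro _ ⟨q, hq, rfl⟩; exact maxServerLoad_nonneg hc hΛ hμ hq⟩
          ⟨q, hq, rfl⟩
    _ ≤ K * maxServerLoad c L μ' p := by
        refine Real.iSup_le (fun m => (hload m).trans ?_) (mul_nonneg K.cast_nonneg hfine)
        calc ∑ b with σ b = m, serverLoad c L μ' p b
            ≤ ∑ b with σ b = m, maxServerLoad c L μ' p :=
              sum_le_sum fun b _ => le_ciSup (Set.finite_range _).bddAbove b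
          _ = K * maxServerLoad c L μ' p := by rw [sum_const, hσ, nsmul_eq_mul]
    _ = maxServerLoad (K * c) L μ' p := (maxServerLoad_mul_left K.cast_nonneg c L μ' p).symm

end Refinement

section Dyadic

def dyadicParent (n : ℕ) (a : Fin (2 ^ (n + 1))) : Fin (2 ^ n) :=
  ⟨a / 2, Nat.div_lt_of_lt_mul (by rw [← pow_succ']; exact a.isLt)⟩

theorem dyadicParent_surjective (n : ℕ) : Function.Surjective (dyadicParent n) := fun h =>
  ⟨⟨2 * h, by have := h.isLt; rw [pow_succ]; omega⟩, Fin.ext (by simp [dyadicParent])⟩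

theorem sum_filter_dyadicParent_eq {α : Type*} [AddCommMonoid α] {n : ℕ}
    (g : Fin (2 ^ (n + 1)) → α) (h : Fin (2 ^ n)) :
    ∑ a with dyadicParent n a = h, g a =
      g ⟨2 * h, by have := h.isLt; rw [pow_succ]; omega⟩ +
        g ⟨2 * h + 1, by have := h.isLt; rw [pow_succ]; omega⟩ := by
  rw [← sum_pair (by simp [Fin.ext_iff])]
  congr 1
  ext a
  simp only [Finset.mem_filter, Finset.mem_univ, true_and, Finset.mem_insert,
    Finset.mem_singleton, dyadicParent, Fin.ext_iff]
  omega

theorem card_filter_dyadicParent_eq (n : ℕ) (h : Fin (2 ^ n)) :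
    #{a | dyadicParent n a = h} = 2 := by
  rw [card_eq_sum_ones, sum_filter_dyadicParent_eq]

def dyadicInterval (n : ℕ) (h : Fin (2 ^ n)) : Set ℝ :=
  Icc (((h : ℕ) : ℝ) / 2 ^ n) ((((h : ℕ) : ℝ) + 1) / 2 ^ n)

theorem div_two_pow_mem_Icc {x : ℝ} {n : ℕ} (h0 : 0 ≤ x) (h1 : x ≤ 2 ^ n) :
    x / 2 ^ n ∈ Icc (0 : ℝ) 1 :=
  ⟨by positivity, (div_le_one (by positivity)).2 h1⟩

theorem dyadicInterval_subset_Icc (n : ℕ) (h : Fin (2 ^ n)) : dyadicInterval n h ⊆ Icc 0 1 :=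
  Icc_subset_Icc (div_two_pow_mem_Icc (by positivity) (by exact_mod_cast h.isLt.le)).1
    (div_two_pow_mem_Icc (by positivity) (by exact_mod_cast h.isLt)).2

theorem dyadicInterval_nonempty (n : ℕ) (h : Fin (2 ^ n)) : (dyadicInterval n h).Nonempty :=
  nonempty_Icc.2 (by gcongr; linarith)

theorem dyadicInterval_subset_parent (n : ℕ) (a : Fin (2 ^ (n + 1))) :
    dyadicInterval (n + 1) a ⊆ dyadicInterval n (dyadicParent n a) := by
  have hlo : 2 * ((a / 2 : ℕ) : ℝ) ≤ a := by exact_mod_cast Nat.mul_div_le a 2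
  have hhi : (a : ℝ) + 1 ≤ 2 * ((a / 2 : ℕ) : ℝ) + 2 := by
    exact_mod_cast (by omega : (a : ℕ) + 1 ≤ 2 * (a / 2) + 2)
  have h2n : (0 : ℝ) < 2 ^ n := by positivity
  refine Icc_subset_Icc ?_ ?_ <;> simp only [dyadicParent, pow_succ] <;>
    rw [div_le_div_iff₀ (by positivity) (by positivity)] <;> nlinarith

theorem lamDyadic_nonneg {lam : ℝ → ℝ} (hlam : ∀ x ∈ Icc (0 : ℝ) 1, 0 ≤ lam x) (n : ℕ)
    (h : Fin (2 ^ n)) : 0 ≤ lamDyadic lam n h :=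
  intervalIntegral.integral_nonneg (nonempty_Icc.1 (dyadicInterval_nonempty n h))
    fun x hx => hlam x (dyadicInterval_subset_Icc n h hx)

theorem lamDyadic_eq_sum {lam : ℝ → ℝ} (hint : IntegrableOn lam (Icc 0 1)) (n : ℕ)
    (h : Fin (2 ^ n)) :
    lamDyadic lam n h = ∑ a with dyadicParent n a = h, lamDyadic lam (n + 1) a := by
  have hint' {x y : ℝ} (hx : x ∈ Icc (0 : ℝ) 1) (hy : y ∈ Icc (0 : ℝ) 1) :
      IntervalIntegrable lam volume x y :=
    (hint.mono_set (uIcc_subset_Icc hx hy)).intervalIntegrable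
  have hh : ((h : ℕ) : ℝ) + 1 ≤ 2 ^ n := by exact_mod_cast h.isLt
  have hlo : 2 * ((h : ℕ) : ℝ) / 2 ^ (n + 1) = (h : ℕ) / 2 ^ n := by
    rw [pow_succ]; field_simp
  have hhi : (2 * ((h : ℕ) : ℝ) + 1 + 1) / 2 ^ (n + 1) = ((h : ℕ) + 1) / 2 ^ n := by
    rw [pow_succ]; field_simp; ring
  rw [sum_filter_dyadicParent_eq]
  simp only [lamDyadic, Nat.cast_add, Nat.cast_mul, Nat.cast_ofNat, Nat.cast_one, hlo, hhi]
  have hmid := div_two_pow_mem_Icc (n := n + 1) (x := 2 * ((h : ℕ) : ℝ) + 1) (by positivity)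
    (by rw [pow_succ]; linarith)
  exact (intervalIntegral.integral_add_adjacent_intervals
    (hint' (div_two_pow_mem_Icc (by positivity) (by linarith)) hmid)
    (hint' hmid (div_two_pow_mem_Icc (by positivity) hh))).symm

variable {f : ℝ × ℝ → ℝ}

theorem bddAbove_image_dyadicSquare (hf : ContinuousOn f (Icc (0 : ℝ) 1 ×ˢ Icc (0 : ℝ) 1))
    (n : ℕ) (h m : Fin (2 ^ n)) : BddAbove (f '' (dyadicInterval n h ×ˢ dyadicInterval n m)) :=
  ((isCompact_Icc.prod isCompact_Icc).image_of_continuousOn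
    (hf.mono (prod_mono (dyadicInterval_subset_Icc n h) (dyadicInterval_subset_Icc n m)))).bddAbove

theorem muHatDyadic_pos (hf : ContinuousOn f (Icc (0 : ℝ) 1 ×ˢ Icc (0 : ℝ) 1))
    (hfpos : ∀ z ∈ Icc (0 : ℝ) 1 ×ˢ Icc (0 : ℝ) 1, 0 < f z) (n : ℕ) (h m : Fin (2 ^ n)) :
    0 < muHatDyadic f n h m := by
  obtain ⟨z, hz⟩ := (dyadicInterval_nonempty n h).prod (dyadicInterval_nonempty n m)
  have hz01 := prod_mono (dyadicInterval_subset_Icc n h) (dyadicInterval_subset_Icc n m) hz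
  exact (hfpos z hz01).trans_le
    (le_csSup (bddAbove_image_dyadicSquare hf n h m) (mem_image_of_mem f hz))

theorem muHatDyadic_le_parent (hf : ContinuousOn f (Icc (0 : ℝ) 1 ×ˢ Icc (0 : ℝ) 1)) (n : ℕ)
    (a b : Fin (2 ^ (n + 1))) :
    muHatDyadic f (n + 1) a b ≤ muHatDyadic f n (dyadicParent n a) (dyadicParent n b) :=
  csSup_le_csSup (bddAbove_image_dyadicSquare hf n _ _)
    (((dyadicInterval_nonempty _ a).prod (dyadicInterval_nonempty _ b)).image f)
    (image_mono
      (prod_mono (dyadicInterval_subset_parent n a) (dyadicInterval_subset_parent n b)))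

end Dyadic

/-- `ρ̄ⁿ ≤ ρ̄^{n+1}` for every `n` (monotonicity of the best-case
dyadic load under refinement, second claim of Lemma C.1). -/
theorem stmt11 (f : ℝ × ℝ → ℝ)
    (hf : ContinuousOn f (Icc (0:ℝ) 1 ×ˢ Icc (0:ℝ) 1))
    (hfpos : ∀ z ∈ Icc (0:ℝ) 1 ×ˢ Icc (0:ℝ) 1, 0 < f z)
    (lam : ℝ → ℝ) (hlam : ∀ x ∈ Icc (0:ℝ) 1, 0 ≤ lam x)
    (hint : IntegrableOn lam (Icc 0 1)) (n : ℕ) :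
    rhoBar f lam n ≤ rhoBar f lam (n + 1) := by
  have hcoarse : lamDyadic lam n =
      fun h => ∑ a with dyadicParent n a = h, lamDyadic lam (n + 1) a :=
    funext (lamDyadic_eq_sum hint n)
  have hscale : (2 : ℝ) ^ (n + 1) = ((2 : ℕ) : ℝ) * 2 ^ n := by push_cast; ring
  rw [rhoBar_eq_optimalMaxLoad, rhoBar_eq_optimalMaxLoad, hcoarse, hscale]
  exact optimalMaxLoad_le_of_refinement (dyadicParent_surjective n) (card_filter_dyadicParent_eq n)
    (by positivity) (by positivity) (lamDyadic_nonneg hlam (n + 1))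
    (fun h m => (muHatDyadic_pos hf hfpos n h m).le) (muHatDyadic_pos hf hfpos (n + 1))
    (muHatDyadic_le_parent hf n)
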